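/- Let ε ≥ 0, δ ≥ 0, let λ be a positive natural number, and let p : Fin (λ+1) → ℝ be a strictly positive function such that for every index i with i ≠ 0, exp(−(ε + 2δ)) · p 0 ≤ p i ≤ exp(ε + 2δ) · p 0. Then 1 / (1 + λ · exp(ε + 2δ)) ≤ p 0 / (∑_{i} p i) ≤ 1 / (1 + λ · exp(−(ε + 2δ))). -/
import Mathlib


/-- Worst-case corollary of the Prompt Obfuscation security analysis: when an
adversary obtains all `λ + 1` prompts, the success probability of guessing
the authentic prompt (index 0) in proportion to the true probabilities lies
between `1 / (1 + λ exp (ε + 2δ))` and `1 / (1 + λ exp (-(ε + 2δ)))`. -/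
theorem worst_case_po_success_bound
    (ε δ : ℝ) (hε : 0 ≤ ε) (hδ : 0 ≤ δ)
    (l : ℕ) (hl : 0 < l)
    (p : Fin (l + 1) → ℝ) (hp : ∀ i, 0 < p i)
    (hbound : ∀ i : Fin (l + 1), i ≠ 0 →
      Real.exp (-(ε + 2 * δ)) * p 0 ≤ p i ∧ p i ≤ Real.exp (ε + 2 * δ) * p 0) :
    1 / (1 + (l : ℝ) * Real.exp (ε + 2 * δ)) ≤ p 0 / (∑ i, p i) ∧
      p 0 / (∑ i, p i) ≤ 1 / (1 + (l : ℝ) * Real.exp (-(ε + 2 * δ))) := by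
  have hp0 : 0 < p 0 := hp 0
  have hsum : ∑ i, p i = p 0 + ∑ i : Fin l, p i.succ := Fin.sum_univ_succ p
  have hupper : ∑ i : Fin l, p i.succ ≤ (l : ℝ) * Real.exp (ε + 2 * δ) * p 0 := by
    calc ∑ i : Fin l, p i.succ ≤ ∑ _i : Fin l, Real.exp (ε + 2 * δ) * p 0 :=
          Finset.sum_le_sum fun i _ => (hbound i.succ (Fin.succ_ne_zero i)).2
      _ = (l : ℝ) * Real.exp (ε + 2 * δ) * p 0 := by
          simp [Finset.sum_const, mul_assoc]
  have hlower : (l : ℝ) * Real.exp (-(ε + 2 * δ)) * p 0 ≤ ∑ i : Fin l, p i.succ := by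
    calc (l : ℝ) * Real.exp (-(ε + 2 * δ)) * p 0
        = ∑ _i : Fin l, Real.exp (-(ε + 2 * δ)) * p 0 := by
          simp [Finset.sum_const, mul_assoc]
      _ ≤ ∑ i : Fin l, p i.succ :=
          Finset.sum_le_sum fun i _ => (hbound i.succ (Fin.succ_ne_zero i)).1
  have hSlb : p 0 * (1 + (l : ℝ) * Real.exp (-(ε + 2 * δ))) ≤ ∑ i, p i := by
    rw [hsum]; nlinarith
  have hSub : ∑ i, p i ≤ p 0 * (1 + (l : ℝ) * Real.exp (ε + 2 * δ)) := by
    rw [hsum]; nlinarith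
  have he1 : (0:ℝ) < 1 + (l : ℝ) * Real.exp (ε + 2 * δ) := by
    positivity
  have he2 : (0:ℝ) < 1 + (l : ℝ) * Real.exp (-(ε + 2 * δ)) := by
    positivity
  have hS : (0:ℝ) < ∑ i, p i := lt_of_lt_of_le (by nlinarith) hSlb
  constructor
  · rw [div_le_div_iff₀ he1 hS, one_mul]
    nlinarith
  · rw [div_le_div_iff₀ hS he2, one_mul]
    nlinarith
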